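/- The function Φ : ℝ^n → ℝ defined by Φ(w) = Σ_{j=1}^n ( −ν_j w_j − ∫_{Vor_w(j)} (‖x − y_j‖ − w_j) dμ(x) ) is continuously differentiable, with partial derivatives ∂Φ/∂w_j (w) = −ν_j + μ(Vor_w(j)) for all j ∈ {1, …, n} and all w ∈ ℝ^n. -/

import Mathlib

/-!
Since the cells `Vor y w j` cover the space and two of them meet only where two weighted distances
`‖x - y j‖ - w j` tie, `Φ(w) = -∑ⱼ νⱼ wⱼ - ∫ w^c dμ` with `w^c(x) = minⱼ (‖x - y j‖ - w j)`.
A tie set lies in a hyperbola-like set `{x | ‖x - p‖ - ‖x - q‖ = c}`, which is Lebesgue-null: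
along every line parallel to `q - p` other than the line through `p` and `q`, strict convexity of
the norm makes `‖x - p‖ - ‖x - q‖` strictly increasing. So for `μ`-a.e. `x`, `w ↦ w^c(x)` is
affine near any `w`, with derivative `-eⱼ` for the unique cell `Vor y w j` containing `x`; it is
also `1`-Lipschitz, so differentiating under the integral gives `∂Φ/∂wⱼ = -νⱼ + μ(Vor y w j)`,
and the same a.e. stability of the cells gives continuity of `w ↦ μ(Vor y w j)`.
-/

open MeasureTheory ENNReal

noncomputable section

/-- The additively weighted Voronoi cell of the site `y j` with weights `w`. -/
def Vor {d n : ℕ} (y : Fin n → EuclideanSpace ℝ (Fin d)) (w : Fin n → ℝ) (j : Fin n) :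
    Set (EuclideanSpace ℝ (Fin d)) :=
  {x | ∀ k, k ≠ j → ‖x - y j‖ - w j ≤ ‖x - y k‖ - w k}

open Set Filter Topology Module

theorem StrictConvexOn.strictMono_sub_comp_sub_const {f : ℝ → ℝ} (hf : StrictConvexOn ℝ univ f)
    {h : ℝ} (hh : 0 < h) : StrictMono fun t => f t - f (t - h) := by
  intro s t hst
  set l := (t - s) / (t - s + h)
  have hl : 0 < l := by positivity
  have hl' : 0 < 1 - l := by rw [sub_pos, div_lt_one (by linarith)]; linarith
  have hs : l * (s - h) + (1 - l) * t = s := by simp only [l]; field_simp; ring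
  have ht : (1 - l) * (s - h) + l * t = t - h := by simp only [l]; field_simp; ring
  -- `s` and `t - h` are the convex combinations of `s - h` and `t` with weights `l, 1 - l`
  -- and `1 - l, l`.
  have h₁ := hf.2 (mem_univ (s - h)) (mem_univ t) (by linarith) hl hl' (by ring)
  have h₂ := hf.2 (mem_univ (s - h)) (mem_univ t) (by linarith) hl' hl (by ring)
  simp only [smul_eq_mul, hs, ht] at h₁ h₂
  dsimp only
  linarith

theorem strictConvexOn_norm_add_smul {E : Type*} [NormedAddCommGroup E] [NormedSpace ℝ E]
    [StrictConvexSpace ℝ E] {a v : E} (hav : LinearIndependent ℝ ![a, v]) :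
    StrictConvexOn ℝ univ fun t : ℝ => ‖a + t • v‖ := by
  refine ⟨convex_univ, fun s _ t _ hst α β hα hβ hαβ => ?_⟩
  have hcomb : α • (a + s • v) + β • (a + t • v) = a + (α • s + β • t) • v := by
    obtain rfl : β = 1 - α := by linarith
    module
  refine (calc ‖a + (α • s + β • t) • v‖ = ‖α • (a + s • v) + β • (a + t • v)‖ := by rw [hcomb]
    _ < ‖α • (a + s • v)‖ + ‖β • (a + t • v)‖ := norm_add_lt_of_not_sameRay fun hray => ?_
    _ = α * ‖a + s • v‖ + β * ‖a + t • v‖ := by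
      rw [norm_smul, norm_smul, Real.norm_of_nonneg hα.le, Real.norm_of_nonneg hβ.le])
  rcases hray with h | h | ⟨r₁, r₂, hr₁, hr₂, h⟩
  · exact hα.ne' (hav.eq_zero_of_pair (t := α * s) (by rw [← h]; module)).1
  · exact hβ.ne' (hav.eq_zero_of_pair (t := β * t) (by rw [← h]; module)).1
  · obtain ⟨h₁, h₂⟩ := hav.eq_of_pair (s := r₁ * α) (t := r₁ * α * s) (s' := r₂ * β)
      (t' := r₂ * β * t) (by convert h using 1 <;> module)
    rw [h₁] at h₂
    exact hst (mul_left_cancel₀ (by positivity) h₂)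

theorem AffineSubspace.mk'_span_singleton_ne_top {E : Type*} [NormedAddCommGroup E]
    [NormedSpace ℝ E] [FiniteDimensional ℝ E] (hE : 2 ≤ finrank ℝ E) (p v : E) :
    AffineSubspace.mk' p (ℝ ∙ v) ≠ ⊤ := by
  intro h
  have htop : (ℝ ∙ v) = ⊤ := by
    rw [← AffineSubspace.direction_mk' p (ℝ ∙ v), h, AffineSubspace.direction_top]
  have := finrank_span_le_card (R := ℝ) ({v} : Set E)
  rw [htop, finrank_top, Set.toFinset_singleton, Finset.card_singleton] at this
  omega

theorem addHaar_setOf_norm_sub_sub_norm_sub_eq {E : Type*} [NormedAddCommGroup E]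
    [NormedSpace ℝ E] [StrictConvexSpace ℝ E] [FiniteDimensional ℝ E] [MeasurableSpace E]
    [BorelSpace E]
    (μ : Measure E) [μ.IsAddHaarMeasure] (hE : 2 ≤ finrank ℝ E) {p q : E} (hpq : p ≠ q) (c : ℝ) :
    μ {x | ‖x - p‖ - ‖x - q‖ = c} = 0 := by
  have hS : IsClosed {x : E | ‖x - p‖ - ‖x - q‖ = c} := isClosed_eq (by fun_prop) continuous_const
  rw [measure_eq_zero_iff_ae_notMem]
  refine (ae_ae_add_linearMap_mem_iff (LinearMap.toSpanSingleton ℝ E (q - p)) volume μ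
    hS.measurableSet.compl).1 ?_
  have hline :=
    Measure.addHaar_affineSubspace μ _ (AffineSubspace.mk'_span_singleton_ne_top hE p (q - p))
  filter_upwards [measure_eq_zero_iff_ae_notMem.1 hline] with x hx
  have hind : LinearIndependent ℝ ![x - p, q - p] := by
    refine linearIndependent_fin2.2 ⟨sub_ne_zero.2 hpq.symm, fun s hs => hx ?_⟩
    exact AffineSubspace.mem_mk'.2 (Submodule.mem_span_singleton.2 ⟨s, hs⟩)
  have hmono := (strictConvexOn_norm_add_smul hind).strictMono_sub_comp_sub_const one_pos
  have hshift (t : ℝ) : ‖x + t • (q - p) - p‖ - ‖x + t • (q - p) - q‖ =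
      ‖(x - p) + t • (q - p)‖ - ‖(x - p) + (t - 1) • (q - p)‖ := by
    congr 2 <;> module
  have hsub : {t : ℝ | x + t • (q - p) ∈ {x : E | ‖x - p‖ - ‖x - q‖ = c}}.Subsingleton := by
    intro t₁ ht₁ t₂ ht₂
    refine hmono.injective ?_
    simp only [mem_ofPred_eq] at ht₁ ht₂
    simp only [← hshift, ht₁, ht₂]
  exact measure_eq_zero_iff_ae_notMem.1 (hsub.measure_zero volume)

section Voronoi

variable {d n : ℕ} (y : Fin n → EuclideanSpace ℝ (Fin d))

theorem isClosed_Vor (w : Fin n → ℝ) (j : Fin n) : IsClosed (Vor y w j) := by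
  simp only [Vor, ofPred_forall]
  exact isClosed_iInter fun k => isClosed_iInter fun _ => isClosed_le (by fun_prop) (by fun_prop)

theorem isClosed_setOf_mem_Vor (x : EuclideanSpace ℝ (Fin d)) (j : Fin n) :
    IsClosed {w : Fin n → ℝ | x ∈ Vor y w j} := by
  show IsClosed {w : Fin n → ℝ | ∀ k, k ≠ j → ‖x - y j‖ - w j ≤ ‖x - y k‖ - w k}
  simp only [ofPred_forall]
  exact isClosed_iInter fun k => isClosed_iInter fun _ => isClosed_le (by fun_prop) (by fun_prop)

variable {y}

theorem eq_of_mem_Vor_of_mem_Vor {w : Fin n → ℝ} {x : EuclideanSpace ℝ (Fin d)}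
    (hx : Pairwise fun j k => ‖x - y j‖ - w j ≠ ‖x - y k‖ - w k) {j k : Fin n}
    (hj : x ∈ Vor y w j) (hk : x ∈ Vor y w k) : j = k := by
  by_contra hjk
  exact hx hjk (le_antisymm (hj k (Ne.symm hjk)) (hk j hjk))

theorem eventually_mem_Vor_iff {w₀ : Fin n → ℝ} {x : EuclideanSpace ℝ (Fin d)}
    (hx : Pairwise fun j k => ‖x - y j‖ - w₀ j ≠ ‖x - y k‖ - w₀ k) (j : Fin n) :
    ∀ᶠ w in 𝓝 w₀, x ∈ Vor y w j ↔ x ∈ Vor y w₀ j := by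
  by_cases hj : x ∈ Vor y w₀ j
  · have hlt : ∀ᶠ w in 𝓝 w₀, ∀ k, k ≠ j → ‖x - y j‖ - w j < ‖x - y k‖ - w k := by
      refine eventually_all.2 fun k => ?_
      by_cases hk : k = j
      · exact Eventually.of_forall fun _ h => absurd hk h
      · exact (ContinuousAt.eventually_lt (continuous_const.sub (continuous_apply j)).continuousAt
          (continuous_const.sub (continuous_apply k)).continuousAt
          ((hj k hk).lt_of_ne (hx (Ne.symm hk)))).mono fun _ h _ => h
    filter_upwards [hlt] with w hw
    exact iff_of_true (fun k hk => (hw k hk).le) hj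
  · filter_upwards [(isClosed_setOf_mem_Vor y x j).isOpen_compl.mem_nhds hj] with w hw
    simpa [hj] using hw

variable [Nonempty (Fin n)]

variable (y) in
/-- The `c`-transform `w^c` of the weights, for the cost `c(x, y) = ‖x - y‖`. -/
def cTransform (w : Fin n → ℝ) (x : EuclideanSpace ℝ (Fin d)) : ℝ :=
  Finset.univ.inf' Finset.univ_nonempty fun j => ‖x - y j‖ - w j

theorem cTransform_eq_of_mem_Vor {w : Fin n → ℝ} {x : EuclideanSpace ℝ (Fin d)} {j : Fin n}
    (h : x ∈ Vor y w j) : cTransform y w x = ‖x - y j‖ - w j :=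
  le_antisymm (Finset.inf'_le _ (Finset.mem_univ j))
    (Finset.le_inf' _ _ fun k _ => if hk : k = j then hk ▸ le_rfl else h k hk)

theorem exists_mem_Vor (w : Fin n → ℝ) (x : EuclideanSpace ℝ (Fin d)) : ∃ j, x ∈ Vor y w j := by
  obtain ⟨j, -, hj⟩ := Finset.exists_mem_eq_inf' Finset.univ_nonempty fun j => ‖x - y j‖ - w j
  exact ⟨j, fun k _ => hj ▸ Finset.inf'_le _ (Finset.mem_univ k)⟩

variable (y) in
theorem continuous_cTransform (w : Fin n → ℝ) : Continuous (cTransform y w) :=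
  Continuous.finset_inf'_apply _ fun _ _ => by fun_prop

variable (y) in
theorem lipschitzWith_cTransform (x : EuclideanSpace ℝ (Fin d)) :
    LipschitzWith 1 fun w => cTransform y w x := by
  refine LipschitzWith.of_le_add fun w w' => ?_
  obtain ⟨j, hj⟩ := exists_mem_Vor (y := y) w' x
  have hdist : w' j - w j ≤ dist w w' :=
    (le_abs_self _).trans ((abs_sub_comm _ _).trans_le (dist_le_pi_dist w w' j))
  have hle : cTransform y w x ≤ ‖x - y j‖ - w j := Finset.inf'_le _ (Finset.mem_univ j)
  rw [cTransform_eq_of_mem_Vor hj]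
  linarith

theorem cTransform_eq_sum_indicator {w : Fin n → ℝ} {x : EuclideanSpace ℝ (Fin d)}
    (hx : Pairwise fun j k => ‖x - y j‖ - w j ≠ ‖x - y k‖ - w k) :
    cTransform y w x = ∑ j, (Vor y w j).indicator (fun x => ‖x - y j‖ - w j) x := by
  obtain ⟨j, hj⟩ := exists_mem_Vor w x
  rw [Finset.sum_eq_single j (fun k _ hk => indicator_of_notMem
    (fun hk' => hk (eq_of_mem_Vor_of_mem_Vor hx hk' hj)) _) (by simp),
    indicator_of_mem hj, cTransform_eq_of_mem_Vor hj]

theorem hasFDerivAt_cTransform {w₀ : Fin n → ℝ} {x : EuclideanSpace ℝ (Fin d)}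
    (hx : Pairwise fun j k => ‖x - y j‖ - w₀ j ≠ ‖x - y k‖ - w₀ k) {j : Fin n}
    (hj : x ∈ Vor y w₀ j) :
    HasFDerivAt (fun w => cTransform y w x) (-ContinuousLinearMap.proj (R := ℝ) j) w₀ := by
  have hev : (fun w => cTransform y w x) =ᶠ[𝓝 w₀] fun w => ‖x - y j‖ - w j :=
    (eventually_mem_Vor_iff hx j).mono fun w hw => cTransform_eq_of_mem_Vor (hw.2 hj)
  refine HasFDerivAt.congr_of_eventuallyEq ?_ hev
  have h := (hasFDerivAt_const (‖x - y j‖) w₀).sub (hasFDerivAt_apply (𝕜 := ℝ) j w₀)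
  rwa [zero_sub] at h

end Voronoi

section Measure

variable {d n : ℕ} {μ : Measure (EuclideanSpace ℝ (Fin d))} {y : Fin n → EuclideanSpace ℝ (Fin d)}

variable (μ) in
theorem ae_pairwise_ne_of_absolutelyContinuous (hd : 2 ≤ d) (hac : μ ≪ volume)
    (hy : Function.Injective y) (w : Fin n → ℝ) :
    ∀ᵐ x ∂μ, Pairwise fun j k => ‖x - y j‖ - w j ≠ ‖x - y k‖ - w k := by
  refine hac.ae_le (ae_all_iff.2 fun j => ae_all_iff.2 fun k => ?_)
  by_cases hjk : j = k
  · exact Eventually.of_forall fun _ h => absurd hjk h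
  have hnull := addHaar_setOf_norm_sub_sub_norm_sub_eq volume
    (by rwa [finrank_euclideanSpace_fin]) (hy.ne hjk) (w j - w k)
  filter_upwards [measure_eq_zero_iff_ae_notMem.1 hnull] with x hx _ htie
  exact hx (show ‖x - y j‖ - ‖x - y k‖ = w j - w k by linarith)

theorem continuous_measureReal_Vor [IsFiniteMeasure μ]
    (hties : ∀ w : Fin n → ℝ, ∀ᵐ x ∂μ, Pairwise fun j k => ‖x - y j‖ - w j ≠ ‖x - y k‖ - w k)
    (j : Fin n) :
    Continuous fun w => μ.real (Vor y w j) :=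
  continuous_iff_continuousAt.2 fun w₀ =>
    (ENNReal.tendsto_toReal (measure_ne_top μ _)).comp <|
      tendsto_measure_of_ae_tendsto_indicator_of_isFiniteMeasure (𝓝 w₀)
        (isClosed_Vor y w₀ j).measurableSet (fun w => (isClosed_Vor y w j).measurableSet)
        ((hties w₀).mono fun _ hx => eventually_mem_Vor_iff hx j)

theorem integrable_norm_sub_sub {E : Type*} [NormedAddCommGroup E] [MeasurableSpace E]
    [OpensMeasurableSpace E] {μ : Measure E} [IsFiniteMeasure μ]
    (hμ : Integrable (fun x => ‖x‖) μ) (z : E) (c : ℝ) : Integrable (fun x => ‖x - z‖ - c) μ := by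
  refine Integrable.sub (Integrable.mono' (hμ.add (integrable_const ‖z‖))
    (by fun_prop : Continuous fun x => ‖x - z‖).aestronglyMeasurable
    (Eventually.of_forall fun x => ?_)) (integrable_const c)
  simpa using norm_sub_le x z

variable [Nonempty (Fin n)] [IsFiniteMeasure μ] {w : Fin n → ℝ}

theorem integrable_cTransform (hμ : Integrable (fun x => ‖x‖) μ)
    (hties : ∀ᵐ x ∂μ, Pairwise fun j k => ‖x - y j‖ - w j ≠ ‖x - y k‖ - w k) :
    Integrable (cTransform y w) μ := by
  refine (integrable_finsetSum _ fun j _ => ?_).congr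
    (hties.mono fun _ hx => (cTransform_eq_sum_indicator hx).symm)
  exact (integrable_norm_sub_sub hμ (y j) (w j)).indicator (isClosed_Vor y w j).measurableSet

theorem integral_cTransform (hμ : Integrable (fun x => ‖x‖) μ)
    (hties : ∀ᵐ x ∂μ, Pairwise fun j k => ‖x - y j‖ - w j ≠ ‖x - y k‖ - w k) :
    ∫ x, cTransform y w x ∂μ = ∑ j, ∫ x in Vor y w j, (‖x - y j‖ - w j) ∂μ := by
  rw [integral_congr_ae (hties.mono fun _ hx => cTransform_eq_sum_indicator hx),
    integral_finsetSum _ fun j _ => (integrable_norm_sub_sub hμ (y j) (w j)).indicator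
      (isClosed_Vor y w j).measurableSet]
  exact Finset.sum_congr rfl fun j _ => integral_indicator (isClosed_Vor y w j).measurableSet

theorem hasFDerivAt_integral_cTransform (hμ : Integrable (fun x => ‖x‖) μ)
    (hties : ∀ᵐ x ∂μ, Pairwise fun j k => ‖x - y j‖ - w j ≠ ‖x - y k‖ - w k) :
    HasFDerivAt (fun w => ∫ x, cTransform y w x ∂μ)
      (-∑ j, μ.real (Vor y w j) • ContinuousLinearMap.proj (R := ℝ) j) w := by
  set F' : EuclideanSpace ℝ (Fin d) → (Fin n → ℝ) →L[ℝ] ℝ := fun x =>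
    -∑ j, (Vor y w j).indicator (1 : EuclideanSpace ℝ (Fin d) → ℝ) x •
      ContinuousLinearMap.proj (R := ℝ) j
  have hF'_int (j : Fin n) : Integrable (fun x =>
      (Vor y w j).indicator (1 : EuclideanSpace ℝ (Fin d) → ℝ) x •
        ContinuousLinearMap.proj (R := ℝ) (φ := fun _ : Fin n => ℝ) j) μ :=
    ((integrable_const (1 : ℝ)).indicator (isClosed_Vor y w j).measurableSet).smul_const _
  have hF' : ∀ᵐ x ∂μ, HasFDerivAt (fun w => cTransform y w x) (F' x) w := by
    filter_upwards [hties] with x hx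
    obtain ⟨j, hj⟩ := exists_mem_Vor w x
    refine (hasFDerivAt_cTransform hx hj).congr_fderiv ?_
    simp only [F']
    rw [Finset.sum_eq_single j (fun k _ hk => by
      rw [indicator_of_notMem (fun hk' => hk (eq_of_mem_Vor_of_mem_Vor hx hk' hj)), zero_smul])
      (by simp), indicator_of_mem hj, Pi.one_apply, one_smul]
  have hderiv := (hasFDerivAt_integral_of_dominated_loc_of_lip (bound := fun _ => 1) univ_mem
    (Eventually.of_forall fun w => (continuous_cTransform y w).aestronglyMeasurable)
    (integrable_cTransform hμ hties) (integrable_finsetSum _ fun j _ => hF'_int j).neg.1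
    (ae_of_all _ fun x => by simpa using lipschitzWith_cTransform y x)
    (integrable_const 1) hF').2
  refine hderiv.congr_fderiv ?_
  rw [integral_neg, integral_finsetSum _ fun j _ => hF'_int j]
  simp only [integral_smul_const, integral_indicator_one (isClosed_Vor y w _).measurableSet]

end Measure

theorem Phi_contDiff_with_partials_general
    {d n : ℕ} (hd : 2 ≤ d)
    (μ : Measure (EuclideanSpace ℝ (Fin d))) [IsProbabilityMeasure μ]
    (hac : μ ≪ volume)
    (hμint : Integrable (fun x => ‖x‖) μ)
    (y : Fin n → EuclideanSpace ℝ (Fin d)) (hy : Function.Injective y)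
    (a : Fin n → ℝ) :
    ∃ Φ' : (Fin n → ℝ) → ((Fin n → ℝ) →L[ℝ] ℝ),
      Continuous Φ' ∧
      (∀ w : Fin n → ℝ,
        HasFDerivAt (fun w : Fin n → ℝ =>
          ∑ j, (-(a j * w j) - ∫ x in Vor y w j, (‖x - y j‖ - w j) ∂μ)) (Φ' w) w) ∧
      (∀ (w : Fin n → ℝ) (j : Fin n),
        Φ' w (Pi.single j 1) = -(a j) + (μ (Vor y w j)).toReal) := by
  rcases isEmpty_or_nonempty (Fin n) with hn | hn
  · exact ⟨0, continuous_const, fun w => by simpa using hasFDerivAt_const (0 : ℝ) w,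
      fun _ j => hn.elim j⟩
  have hties := ae_pairwise_ne_of_absolutelyContinuous μ hd hac hy
  refine ⟨fun w => ∑ j, (-a j + μ.real (Vor y w j)) • ContinuousLinearMap.proj (R := ℝ) j,
    continuous_finsetSum _ fun j _ =>
      (continuous_const.add (continuous_measureReal_Vor hties j)).smul continuous_const,
    fun w₀ => ?_, fun w j => by simp [Pi.single_apply, measureReal_def]⟩
  have hΦ :
      (fun w : Fin n → ℝ => ∑ j, (-(a j * w j) - ∫ x in Vor y w j, (‖x - y j‖ - w j) ∂μ)) =
        fun w => (∑ j, -a j • ContinuousLinearMap.proj (R := ℝ) j) w -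
          ∫ x, cTransform y w x ∂μ := by
    ext w
    rw [integral_cTransform hμint (hties w), Finset.sum_sub_distrib]
    simp
  rw [hΦ]
  refine ((ContinuousLinearMap.hasFDerivAt _).sub
    (hasFDerivAt_integral_cTransform hμint (hties w₀))).congr_fderiv ?_
  simp only [sub_neg_eq_add, ← Finset.sum_add_distrib, add_smul]

/-- The function
`Φ(w) = ∑ⱼ ( -νⱼ wⱼ - ∫_{Vor_w(j)} (‖x - yⱼ‖ - wⱼ) dμ(x) )` is continuously
differentiable with partial derivatives `∂Φ/∂wⱼ (w) = -νⱼ + μ(Vor_w(j))`. -/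
theorem Phi_contDiff_with_partials
    {d n : ℕ} (hd : 2 ≤ d)
    (μ : Measure (EuclideanSpace ℝ (Fin d))) [IsProbabilityMeasure μ]
    (hac : μ ≪ volume)
    (hμint : Integrable (fun x => ‖x‖) μ)
    (y : Fin n → EuclideanSpace ℝ (Fin d)) (hy : Function.Injective y)
    (a : Fin n → ℝ) (ha : ∀ j, a j ∈ Set.Ioc (0 : ℝ) 1) (hsum : ∑ j, a j = 1) :
    ∃ Φ' : (Fin n → ℝ) → ((Fin n → ℝ) →L[ℝ] ℝ),
      Continuous Φ' ∧
      (∀ w : Fin n → ℝ,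
        HasFDerivAt (fun w : Fin n → ℝ =>
          ∑ j, (-(a j * w j) - ∫ x in Vor y w j, (‖x - y j‖ - w j) ∂μ)) (Φ' w) w) ∧
      (∀ (w : Fin n → ℝ) (j : Fin n),
        Φ' w (Pi.single j 1) = -(a j) + (μ (Vor y w j)).toReal) :=
  Phi_contDiff_with_partials_general hd μ hac hμint y hy a
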